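/- arXiv:1604.06943 — 5 statements merged into one kernel-verified Lean document; each statement's English description precedes it below -/
import Mathlib

section
/- Let Θ be a metric space, Ψ : Θ × ℝ → ℝ jointly measurable and Lipschitz in the second variable with E[log L(Ψ)] < 0 and E[log⁺|Ψ(ω,0)|] < ∞, and assume that for every x ∈ ℝ the map θ ↦ Ψ(θ, x) is continuous. Let ν be the law of the stationary solution X of X_n = Ψ(ω_n, X_{n−1}). Then almost surely Ψ(ω, ·) maps the topological support of ν into itself: Ψ(ω, supp ν) ⊆ supp ν a.s. -/
open MeasureTheory ProbabilityTheory Filter Set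

/-- The topological support of a measure: points all of whose neighborhoods have
positive measure. -/
def mSupport {E : Type*} [TopologicalSpace E] {mE : MeasurableSpace E}
    (ν : Measure E) : Set E :=
  {x | ∀ U ∈ nhds x, 0 < ν U}

lemma isOpen_compl_mSupport {E : Type*} [TopologicalSpace E] {mE : MeasurableSpace E}
    (ν : Measure E) : IsOpen (mSupport ν)ᶜ := by
  rw [isOpen_iff_mem_nhds]
  intro x hx
  simp only [mem_compl_iff, mSupport, mem_setOf_eq, not_forall] at hx
  obtain ⟨U, hU, hνU⟩ := hx
  obtain ⟨V, hVU, hVopen, hxV⟩ := mem_nhds_iff.mp hU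
  filter_upwards [hVopen.mem_nhds hxV] with y hy
  simp only [mem_compl_iff, mSupport, mem_setOf_eq, not_forall]
  exact ⟨V, hVopen.mem_nhds hy, fun h => hνU (h.trans_le (measure_mono hVU))⟩

lemma measure_compl_mSupport {E : Type*} [TopologicalSpace E]
    [SecondCountableTopology E] {mE : MeasurableSpace E}
    (ν : Measure E) : ν (mSupport ν)ᶜ = 0 := by
  have h : ∀ x : {y : E // y ∉ mSupport ν}, ∃ V : Set E, IsOpen V ∧ (x : E) ∈ V ∧ ν V = 0 := by
    rintro ⟨x, hx⟩
    simp only [mSupport, mem_setOf_eq, not_forall] at hx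
    obtain ⟨U, hU, hνU⟩ := hx
    obtain ⟨V, hVU, hVopen, hxV⟩ := mem_nhds_iff.mp hU
    exact ⟨V, hVopen, hxV, le_antisymm (by
      simpa using (measure_mono hVU).trans (le_of_not_gt hνU)) (zero_le)⟩
  choose V hVopen hVmem hVnull using h
  obtain ⟨T, hTc, hTU⟩ := TopologicalSpace.isOpen_iUnion_countable V hVopen
  have hnull : ν (⋃ i ∈ T, V i) = 0 :=
    (measure_biUnion_null_iff hTc).mpr (fun i _ => hVnull i)
  refine le_antisymm ((measure_mono ?_).trans hnull.le) (zero_le)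
  rw [hTU]
  exact fun x hx => mem_iUnion.mpr ⟨⟨x, hx⟩, hVmem ⟨x, hx⟩⟩

/-- For an IFS with driving maps depending continuously on the parameter, the transformations
almost surely preserve the support of the stationary law. -/
theorem stmt_2
    {Ω : Type*} [MeasurableSpace Ω]
    {Θ : Type*} [MetricSpace Θ] [MeasurableSpace Θ] [BorelSpace Θ]
    (P : Measure Ω) [IsProbabilityMeasure P]
    (Ψ : Θ × ℝ → ℝ) (hΨm : Measurable Ψ)
    (hΨcont : ∀ x : ℝ, Continuous fun θ => Ψ (θ, x))
    (L : Θ → ℝ) (hLm : Measurable L)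
    (hLip : ∀ θ x y, |Ψ (θ, x) - Ψ (θ, y)| ≤ L θ * |x - y|)
    (ξ : Ω → Θ) (hξ : Measurable ξ)
    (hlogL_int : Integrable (fun ω => Real.log (L (ξ ω))) P)
    (hlogL_neg : ∫ ω, Real.log (L (ξ ω)) ∂P < 0)
    (hΨ0 : ∫⁻ ω, ENNReal.ofReal (max (Real.log |Ψ (ξ ω, 0)|) 0) ∂P < ⊤)
    (X : Ω → ℝ) (hXm : Measurable X)
    (hindep : IndepFun ξ X P)
    (hstat : Measure.map X P = Measure.map (fun ω => Ψ (ξ ω, X ω)) P) :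
    ∀ᵐ ω ∂P, ∀ x ∈ mSupport (Measure.map X P), Ψ (ξ ω, x) ∈ mSupport (Measure.map X P) := by
  set ν := Measure.map X P with hν
  set S := mSupport ν with hS
  have hScopen : IsOpen Sᶜ := isOpen_compl_mSupport ν
  have hScmeas : MeasurableSet Sᶜ := hScopen.measurableSet
  have hνSc : ν Sᶜ = 0 := measure_compl_mSupport ν
  -- stationarity
  have h1 : P ((fun ω => Ψ (ξ ω, X ω)) ⁻¹' Sᶜ) = 0 := by
    rw [← Measure.map_apply (f := fun ω => Ψ (ξ ω, X ω)) (hΨm.comp (hξ.prodMk hXm)) hScmeas, ← hstat]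
    exact hνSc
  -- independence / product measure
  have hmap : Measure.map (fun ω => (ξ ω, X ω)) P = (Measure.map ξ P).prod ν :=
    (indepFun_iff_map_prod_eq_prod_map_map hξ.aemeasurable hXm.aemeasurable).mp hindep
  have h2 : ((Measure.map ξ P).prod ν) (Ψ ⁻¹' Sᶜ) = 0 := by
    rw [← hmap, Measure.map_apply (hξ.prodMk hXm) (hΨm hScmeas)]
    exact h1
  have h3 : ∀ᵐ θ ∂(Measure.map ξ P), ν (Prod.mk θ ⁻¹' (Ψ ⁻¹' Sᶜ)) = 0 :=
    (Measure.measure_prod_null (hΨm hScmeas)).mp h2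
  have h4 : ∀ᵐ ω ∂P, ν (Prod.mk (ξ ω) ⁻¹' (Ψ ⁻¹' Sᶜ)) = 0 :=
    ae_of_ae_map hξ.aemeasurable h3
  filter_upwards [h4] with ω hω x hxS
  by_contra hnot
  -- the preimage of Sᶜ under the continuous map Ψ (ξ ω, ·) is an open null nbhd of x
  have hcont : Continuous (fun y : ℝ => Ψ (ξ ω, y)) := by
    apply LipschitzWith.continuous (K := Real.toNNReal (L (ξ ω)))
    intro a b
    rw [edist_dist, edist_dist, Real.dist_eq, Real.dist_eq]
    rw [← ENNReal.ofReal_coe_nnreal, ← ENNReal.ofReal_mul (by positivity)]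
    apply ENNReal.ofReal_le_ofReal
    calc |Ψ (ξ ω, a) - Ψ (ξ ω, b)| ≤ L (ξ ω) * |a - b| := hLip _ _ _
      _ ≤ Real.toNNReal (L (ξ ω)) * |a - b| := by
          apply mul_le_mul_of_nonneg_right (Real.le_coe_toNNReal _) (abs_nonneg _)
  have hUopen : IsOpen ((fun y : ℝ => Ψ (ξ ω, y)) ⁻¹' Sᶜ) := hScopen.preimage hcont
  have hxU : x ∈ (fun y : ℝ => Ψ (ξ ω, y)) ⁻¹' Sᶜ := hnot
  have := hxS _ (hUopen.mem_nhds hxU)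
  rw [show ((fun y : ℝ => Ψ (ξ ω, y)) ⁻¹' Sᶜ) = Prod.mk (ξ ω) ⁻¹' (Ψ ⁻¹' Sᶜ) from rfl, hω] at this
  exact lt_irrefl _ this
end

section
/- Let (A,B) be a random pair in (0,∞)×ℝ with law μ, with E[log A] < 0 and E[log⁺|B|] < ∞, and let ν be the law of the stationary solution X of X =_d AX + B. If there exist (a₁,b₁), (a₂,b₂) in the support of μ with a₁ > 1, a₂ < 1 and x(a₁,b₁) < x(a₂,b₂), then there exists a constant c ∈ ℝ such that the support of ν contains the half-line [c, ∞). -/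
open MeasureTheory ProbabilityTheory Filter Set

/-! ### Deterministic core: density of the orbit of an expanding/contracting pair -/

section Core
variable {a₁ a₂ : ℝ} {O : Set ℝ}

lemma pow_mem_orbit (hf : ∀ u ∈ O, a₁ * u ∈ O) :
    ∀ n : ℕ, ∀ u ∈ O, a₁ ^ n * u ∈ O := by
  intro n
  induction n with
  | zero => intro u hu; simpa using hu
  | succ n ih =>
    intro u hu
    have h : a₁ ^ (n+1) * u = a₁ * (a₁ ^ n * u) := by ring
    rw [h]
    exact hf _ (ih u hu)

/-- finishing step: if `a₁ * l < r` and `1 ≤ l`, some power of `a₁` lies in `(l,r)`. -/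
lemma finish_step (h₁ : 1 < a₁) (h1 : (1:ℝ) ∈ O) (hf : ∀ u ∈ O, a₁ * u ∈ O)
    {l r : ℝ} (hl : 1 ≤ l) (hlr : a₁ * l < r) :
    ∃ u ∈ O, l < u ∧ u < r := by
  obtain ⟨n, hn1, hn2⟩ := exists_nat_pow_near hl h₁
  refine ⟨a₁ ^ (n+1), ?_, hn2, ?_⟩
  · have := pow_mem_orbit hf (n+1) 1 h1
    simpa using this
  · have h : a₁ ^ (n+1) = a₁ * a₁ ^ n := by ring
    rw [h]
    calc a₁ * a₁ ^ n ≤ a₁ * l := by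
          apply mul_le_mul_of_nonneg_left hn1 (by linarith)
    _ < r := hlr

set_option maxHeartbeats 1600000 in
lemma key_induction (h₁ : 1 < a₁) (h₂0 : 0 < a₂) (h₂1 : a₂ < 1)
    (h1 : (1:ℝ) ∈ O) (hf : ∀ u ∈ O, a₁ * u ∈ O)
    (hg : ∀ u ∈ O, a₂ * u + (1 - a₂) ∈ O)
    (ρ₀ : ℝ) (hρ₀ : 1 < ρ₀) :
    ∀ k : ℕ, ∀ l r : ℝ, 1 ≤ l → ρ₀ * l ≤ r →
      a₁ * l < (1 + (1 - a₂) * (ρ₀ - 1) / (ρ₀ * a₁)) ^ k * r →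
      ∃ u ∈ O, l < u ∧ u < r := by
  set c : ℝ := 1 - a₂ with hc
  have hcpos : 0 < c := by rw [hc]; linarith
  have hc1 : c < 1 := by rw [hc]; linarith
  set θ : ℝ := c * (ρ₀ - 1) / (ρ₀ * a₁) with hθ
  have hρ₀pos : (0:ℝ) < ρ₀ := by linarith
  have ha₁pos : (0:ℝ) < a₁ := by linarith
  have hθpos : 0 < θ := div_pos (by nlinarith) (by nlinarith)
  have hθeq : θ * (ρ₀ * a₁) = c * (ρ₀ - 1) := by
    rw [hθ]; field_simp
  clear_value c θ
  intro k
  induction k with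
  | zero =>
    intro l r hl hρ hk
    simp only [pow_zero, one_mul] at hk
    exact finish_step h₁ h1 hf hl hk
  | succ k ih =>
    intro l r hl hρ hk
    have hlpos : (0:ℝ) < l := by linarith
    have hrl : l < r := by nlinarith
    rcases lt_or_ge (a₁ * l) r with hfin | hcase
    · exact finish_step h₁ h1 hf hl hfin
    -- macro step
    obtain ⟨n, hn1, hn2⟩ := exists_nat_pow_near hl h₁
    set t : ℝ := a₁ ^ n with ht
    have htpos : 0 < t := pow_pos ha₁pos n
    clear_value t
    set l₁ : ℝ := l / t with hl₁
    set r₁ : ℝ := r / t with hr₁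
    clear_value l₁ r₁
    have hl₁1 : 1 ≤ l₁ := by rw [hl₁, le_div_iff₀ htpos]; simpa using hn1
    have hl₁pos : 0 < l₁ := by linarith
    have hl₁a : l₁ < a₁ := by
      rw [hl₁, div_lt_iff₀ htpos]
      calc l < a₁ ^ (n+1) := hn2
      _ = a₁ * t := by rw [ht]; ring
    have hρ₁ : ρ₀ * l₁ ≤ r₁ := by
      rw [hl₁, hr₁, ← mul_div_assoc]
      gcongr
    have hr₁pos : 0 < r₁ := by nlinarith
    have hr₁l₁ : l₁ < r₁ := by nlinarith
    set l₂ : ℝ := (l₁ - c) / a₂ with hl₂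
    set r₂ : ℝ := (r₁ - c) / a₂ with hr₂
    clear_value l₂ r₂
    have hl₂1 : 1 ≤ l₂ := by rw [hl₂, le_div_iff₀ h₂0]; rw [hc]; linarith
    have hl₂pos : 0 < l₂ := by linarith
    have hr₂pos : 0 < r₂ := by rw [hr₂]; exact div_pos (by linarith) h₂0
    have hl₁eq : a₂ * l₂ + c = l₁ := by rw [hl₂]; field_simp; ring
    have hr₁eq : a₂ * r₂ + c = r₁ := by rw [hr₂]; field_simp; ring
    -- the gain inequality
    have hgain : (1 + θ) * r₁ * l₂ ≤ r₂ * l₁ := by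
      have h3 : (ρ₀ - 1) * r₁ ≤ ρ₀ * (r₁ - l₁) := by nlinarith
      have hAB : c * (ρ₀ - 1) * r₁ * l₁ ≤ c * ρ₀ * (r₁ - l₁) * l₁ := by
        nlinarith [mul_le_mul_of_nonneg_right h3 (mul_nonneg hcpos.le hl₁pos.le)]
      have hBC : c * ρ₀ * (r₁ - l₁) * l₁ ≤ c * ρ₀ * (r₁ - l₁) * a₁ := by
        have hnn : (0:ℝ) ≤ c * ρ₀ * (r₁ - l₁) :=
          mul_nonneg (mul_nonneg hcpos.le hρ₀pos.le) (sub_nonneg.2 hr₁l₁.le)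
        exact mul_le_mul_of_nonneg_left hl₁a.le hnn
      have hmain : θ * r₁ * l₁ ≤ c * (r₁ - l₁) := by
        have hscaled : (θ * r₁ * l₁) * (ρ₀ * a₁) ≤ (c * (r₁ - l₁)) * (ρ₀ * a₁) := by
          calc (θ * r₁ * l₁) * (ρ₀ * a₁) = c * (ρ₀ - 1) * r₁ * l₁ := by
                linear_combination (r₁ * l₁) * hθeq
          _ ≤ c * ρ₀ * (r₁ - l₁) * a₁ := hAB.trans hBC
          _ = (c * (r₁ - l₁)) * (ρ₀ * a₁) := by ring
        exact le_of_mul_le_mul_right hscaled (by positivity)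
      have key : (1 + θ) * r₁ * (l₁ - c) ≤ (r₁ - c) * l₁ := by
        linarith [hmain, mul_pos (mul_pos hθpos hr₁pos) hcpos]
      calc (1 + θ) * r₁ * l₂ = ((1 + θ) * r₁ * (l₁ - c)) / a₂ := by rw [hl₂]; ring
      _ ≤ ((r₁ - c) * l₁) / a₂ := by gcongr
      _ = r₂ * l₁ := by rw [hr₂]; ring
    -- new invariants
    have hρ₂ : ρ₀ * l₂ ≤ r₂ := by
      have h1' : ρ₀ * l₂ * l₁ ≤ r₂ * l₁ := by
        linarith [mul_le_mul_of_nonneg_right hρ₁ hl₂pos.le, hgain,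
          mul_nonneg (mul_nonneg hθpos.le hr₁pos.le) hl₂pos.le]
      exact le_of_mul_le_mul_right h1' hl₁pos
    have hk₂ : a₁ * l₂ < (1 + θ) ^ k * r₂ := by
      have hk₁ : a₁ * l₁ < (1 + θ) ^ (k + 1) * r₁ := by
        rw [hl₁, hr₁, mul_div_assoc', mul_div_assoc']
        gcongr
      have hchain : a₁ * l₂ * ((1 + θ) * r₁) < (1 + θ) ^ k * r₂ * ((1 + θ) * r₁) := by
        calc a₁ * l₂ * ((1 + θ) * r₁) = a₁ * ((1 + θ) * r₁ * l₂) := by ring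
        _ ≤ a₁ * (r₂ * l₁) := mul_le_mul_of_nonneg_left hgain ha₁pos.le
        _ = r₂ * (a₁ * l₁) := by ring
        _ < r₂ * ((1 + θ) ^ (k + 1) * r₁) := by
            exact mul_lt_mul_of_pos_left hk₁ hr₂pos
        _ = (1 + θ) ^ k * r₂ * ((1 + θ) * r₁) := by ring
      exact lt_of_mul_lt_mul_right hchain (by positivity)
    obtain ⟨u, huO, hul, hur⟩ := ih l₂ r₂ hl₂1 hρ₂ hk₂
    have hvO : a₂ * u + c ∈ O := hg u huO
    refine ⟨t * (a₂ * u + c), by rw [ht]; exact pow_mem_orbit hf n _ hvO, ?_, ?_⟩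
    · have : l₁ < a₂ * u + c := by
        rw [← hl₁eq]
        have := mul_lt_mul_of_pos_left hul h₂0
        linarith
      calc l = t * l₁ := by rw [hl₁]; field_simp
      _ < t * (a₂ * u + c) := by exact mul_lt_mul_of_pos_left this htpos
    · have : a₂ * u + c < r₁ := by
        rw [← hr₁eq]
        have := mul_lt_mul_of_pos_left hur h₂0
        linarith
      calc t * (a₂ * u + c) < t * r₁ := mul_lt_mul_of_pos_left this htpos
      _ = r := by rw [hr₁]; field_simp

/-- Density of the orbit in `[1, ∞)`. -/
lemma core_dense (h₁ : 1 < a₁) (h₂0 : 0 < a₂) (h₂1 : a₂ < 1)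
    (h1 : (1:ℝ) ∈ O) (hf : ∀ u ∈ O, a₁ * u ∈ O)
    (hg : ∀ u ∈ O, a₂ * u + (1 - a₂) ∈ O) :
    ∀ l r : ℝ, 1 ≤ l → l < r → ∃ u ∈ O, l < u ∧ u < r := by
  intro l r hl hlr
  have hlpos : (0:ℝ) < l := by linarith
  set ρ₀ : ℝ := r / l with hρ₀def
  have hρ₀ : 1 < ρ₀ := (one_lt_div hlpos).2 hlr
  set θ : ℝ := (1 - a₂) * (ρ₀ - 1) / (ρ₀ * a₁) with hθ
  have hθpos : 0 < θ := div_pos (by nlinarith) (by nlinarith)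
  obtain ⟨k, hk⟩ := pow_unbounded_of_one_lt (a₁ * l / r) (by linarith : (1:ℝ) < 1 + θ)
  apply key_induction h₁ h₂0 h₂1 h1 hf hg ρ₀ hρ₀ k l r hl
  · rw [hρ₀def]; field_simp; exact le_rfl
  · rw [div_lt_iff₀ (by linarith : (0:ℝ) < r)] at hk
    exact hk

end Core

/-! ### Support lemmas -/

section Supp
variable {E : Type*} [TopologicalSpace E] {mE : MeasurableSpace E} {ν : Measure E}

lemma mSupport_isClosed : IsClosed (mSupport ν) := by
  rw [← isOpen_compl_iff]
  rw [isOpen_iff_mem_nhds]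
  intro x hx
  simp only [mSupport, mem_compl_iff, mem_setOf_eq, not_forall] at hx
  obtain ⟨U, hU, hUpos⟩ := hx
  obtain ⟨V, hVU, hVopen, hxV⟩ := mem_nhds_iff.mp hU
  filter_upwards [hVopen.mem_nhds hxV] with y hyV
  simp only [mSupport, mem_compl_iff, mem_setOf_eq, not_forall]
  exact ⟨V, hVopen.mem_nhds hyV, fun h => hUpos (h.trans_le (measure_mono hVU))⟩

lemma mSupport_compl_null [SecondCountableTopology E] :
    ν (mSupport ν)ᶜ = 0 := by
  have h : ∀ x : ((mSupport ν)ᶜ : Set E), ∃ U : Set E, IsOpen U ∧ (x : E) ∈ U ∧ ν U = 0 := by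
    rintro ⟨x, hx⟩
    simp only [mSupport, mem_compl_iff, mem_setOf_eq, not_forall] at hx
    obtain ⟨U, hU, hUpos⟩ := hx
    obtain ⟨V, hVU, hVopen, hxV⟩ := mem_nhds_iff.mp hU
    refine ⟨V, hVopen, hxV, ?_⟩
    have : ν U = 0 := by simpa [pos_iff_ne_zero] using hUpos
    exact measure_mono_null hVU this
  choose U hUopen hxU hU0 using h
  obtain ⟨T, hTc, hTeq⟩ := TopologicalSpace.isOpen_iUnion_countable U hUopen
  have hcover : (mSupport ν)ᶜ ⊆ ⋃ i ∈ T, U i := by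
    rw [hTeq]
    intro x hx
    exact mem_iUnion.2 ⟨⟨x, hx⟩, hxU _⟩
  refine measure_mono_null hcover ?_
  exact (measure_biUnion_null_iff hTc).2 fun i _ => hU0 i

lemma mSupport_meets [SecondCountableTopology E] {s : Set E} (hs : ν s ≠ 0) :
    ∃ x ∈ s, x ∈ mSupport ν := by
  by_contra h
  push_neg at h
  exact hs (measure_mono_null (fun x hx => h x hx) mSupport_compl_null)

lemma mSupport_nonempty [SecondCountableTopology E] [IsProbabilityMeasure ν] :
    (mSupport ν).Nonempty := by
  obtain ⟨x, -, hx⟩ := mSupport_meets (ν := ν) (s := (univ : Set E)) (by simp)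
  exact ⟨x, hx⟩

end Supp

/-! ### Invariance of the support of the stationary law -/

section Inv
variable {Ω : Type*} [MeasurableSpace Ω] {P : Measure Ω}
  {A B X : Ω → ℝ}

lemma invariance_step (hAm : Measurable A) (hBm : Measurable B) (hXm : Measurable X)
    (hindep : IndepFun (fun ω => (A ω, B ω)) X P)
    (hstat : Measure.map X P = Measure.map (fun ω => A ω * X ω + B ω) P)
    {a b x : ℝ} (hab : (a, b) ∈ mSupport (Measure.map (fun ω => (A ω, B ω)) P))
    (hx : x ∈ mSupport (Measure.map X P)) :
    a * x + b ∈ mSupport (Measure.map X P) := by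
  intro U hU
  obtain ⟨V, hVU, hVopen, hxV⟩ := mem_nhds_iff.mp hU
  have hcont : ContinuousAt (fun p : (ℝ × ℝ) × ℝ => p.1.1 * p.2 + p.1.2) ((a, b), x) := by
    fun_prop
  have hV : (fun p : (ℝ × ℝ) × ℝ => p.1.1 * p.2 + p.1.2) ⁻¹' V ∈ nhds ((a, b), x) :=
    hcont.preimage_mem_nhds (hVopen.mem_nhds hxV)
  rw [nhds_prod_eq] at hV
  obtain ⟨W₁, hW₁, W₂, hW₂, hprod⟩ := Filter.mem_prod_iff.mp hV
  obtain ⟨O₁, hO₁W, hO₁open, habO₁⟩ := mem_nhds_iff.mp hW₁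
  obtain ⟨O₂, hO₂W, hO₂open, hxO₂⟩ := mem_nhds_iff.mp hW₂
  have hABm : Measurable (fun ω => (A ω, B ω)) := hAm.prodMk hBm
  have hYm : Measurable (fun ω => A ω * X ω + B ω) := (hAm.mul hXm).add hBm
  have hsub : (fun ω => (A ω, B ω)) ⁻¹' O₁ ∩ X ⁻¹' O₂
      ⊆ (fun ω => A ω * X ω + B ω) ⁻¹' V := by
    rintro ω ⟨h1, h2⟩
    exact hprod (Set.mk_mem_prod (hO₁W h1) (hO₂W h2))
  have hPeq := hindep.measure_inter_preimage_eq_mul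
    (s := O₁) (t := O₂) hO₁open.measurableSet hO₂open.measurableSet
  have h1 : 0 < P ((fun ω => (A ω, B ω)) ⁻¹' O₁) := by
    have := hab O₁ (hO₁open.mem_nhds habO₁)
    rwa [Measure.map_apply hABm hO₁open.measurableSet] at this
  have h2 : 0 < P (X ⁻¹' O₂) := by
    have := hx O₂ (hO₂open.mem_nhds hxO₂)
    rwa [Measure.map_apply hXm hO₂open.measurableSet] at this
  have hpos : 0 < P ((fun ω => (A ω, B ω)) ⁻¹' O₁ ∩ X ⁻¹' O₂) := by
    rw [hPeq]
    exact ENNReal.mul_pos h1.ne' h2.ne'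
  calc (0:ENNReal) < P ((fun ω => (A ω, B ω)) ⁻¹' O₁ ∩ X ⁻¹' O₂) := hpos
  _ ≤ P ((fun ω => A ω * X ω + B ω) ⁻¹' V) := measure_mono hsub
  _ = Measure.map (fun ω => A ω * X ω + B ω) P V :=
      (Measure.map_apply hYm hVopen.measurableSet).symm
  _ = Measure.map X P V := by rw [hstat]
  _ ≤ Measure.map X P U := measure_mono hVU

end Inv

/-- If the support of the law `μ` of `(A,B)` contains an expanding map `(a₁,b₁)` (`a₁ > 1`)
and a contracting map `(a₂,b₂)` (`a₂ < 1`) with `x(a₁,b₁) < x(a₂,b₂)`, then the support of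
the stationary law `ν` contains a half-line `[c,∞)`. -/
theorem stmt_5
    {Ω : Type*} [MeasurableSpace Ω] (P : Measure Ω) [IsProbabilityMeasure P]
    (A B X : Ω → ℝ) (hAm : Measurable A) (hBm : Measurable B) (hXm : Measurable X)
    (hApos : ∀ᵐ ω ∂P, 0 < A ω)
    (hlogA_int : Integrable (fun ω => Real.log (A ω)) P)
    (hlogA_neg : ∫ ω, Real.log (A ω) ∂P < 0)
    (hlogB : ∫⁻ ω, ENNReal.ofReal (max (Real.log |B ω|) 0) ∂P < ⊤)
    (hindep : IndepFun (fun ω => (A ω, B ω)) X P)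
    (hstat : Measure.map X P = Measure.map (fun ω => A ω * X ω + B ω) P)
    (hpts : ∃ p ∈ mSupport (Measure.map (fun ω => (A ω, B ω)) P),
            ∃ q ∈ mSupport (Measure.map (fun ω => (A ω, B ω)) P),
              1 < p.1 ∧ q.1 < 1 ∧ p.2 / (1 - p.1) < q.2 / (1 - q.1)) :
    ∃ c : ℝ, Set.Ici c ⊆ mSupport (Measure.map X P) := by
  classical
  obtain ⟨p, hp, q, hq, hp1, hq1, hpq⟩ := hpts
  have hABm : Measurable (fun ω => (A ω, B ω)) := hAm.prodMk hBm
  haveI : IsProbabilityMeasure (Measure.map X P) :=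
    Measure.isProbabilityMeasure_map hXm.aemeasurable
  set x₁ : ℝ := p.2 / (1 - p.1) with hx₁def
  -- `A ≤ 0` is null for the law of `(A,B)`
  have hAneg : Measure.map (fun ω => (A ω, B ω)) P {pt : ℝ × ℝ | pt.1 ≤ 0} = 0 := by
    rw [Measure.map_apply hABm ((isClosed_le continuous_fst continuous_const).measurableSet)]
    have : (fun ω => (A ω, B ω)) ⁻¹' {pt : ℝ × ℝ | pt.1 ≤ 0} = {ω | ¬ 0 < A ω} := by
      ext ω; simp [not_lt]
    rw [this]
    exact hApos
  -- find a support point `q'` of the law of `(A,B)` with positive contraction ratio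
  have hq'ex : ∃ q' : ℝ × ℝ, q' ∈ mSupport (Measure.map (fun ω => (A ω, B ω)) P) ∧
      0 < q'.1 ∧ q'.1 < 1 ∧ x₁ < q'.2 / (1 - q'.1) := by
    have hgq : ContinuousAt (fun pt : ℝ × ℝ => pt.2 / (1 - pt.1)) q := by
      apply ContinuousAt.div
      · fun_prop
      · fun_prop
      · exact sub_ne_zero.2 (ne_of_gt hq1)
    have e2 : (fun pt : ℝ × ℝ => pt.2 / (1 - pt.1)) ⁻¹' Ioi x₁ ∈ nhds q :=
      hgq.preimage_mem_nhds (Ioi_mem_nhds hpq)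
    have e1 : {pt : ℝ × ℝ | pt.1 < 1} ∈ nhds q :=
      (isOpen_lt continuous_fst continuous_const).mem_nhds hq1
    obtain ⟨O, hOsub, hOopen, hqO⟩ := mem_nhds_iff.mp (inter_mem e1 e2)
    have hOpos : 0 < Measure.map (fun ω => (A ω, B ω)) P O := hq O (hOopen.mem_nhds hqO)
    have hEpos : Measure.map (fun ω => (A ω, B ω)) P (O ∩ {pt : ℝ × ℝ | 0 < pt.1}) ≠ 0 := by
      intro h0
      have hsplit : O ⊆ (O ∩ {pt : ℝ × ℝ | 0 < pt.1}) ∪ {pt : ℝ × ℝ | pt.1 ≤ 0} := by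
        intro pt hpt
        by_cases hc : 0 < pt.1
        · exact Or.inl ⟨hpt, hc⟩
        · exact Or.inr (le_of_not_gt hc)
      have : Measure.map (fun ω => (A ω, B ω)) P O = 0 := by
        refine measure_mono_null hsplit ?_
        exact measure_union_null h0 hAneg
      exact hOpos.ne' this
    obtain ⟨q', hq'E, hq'supp⟩ := mSupport_meets hEpos
    obtain ⟨hq'O, hq'pos⟩ := hq'E
    obtain ⟨hq'1, hq'x⟩ := hOsub hq'O
    exact ⟨q', hq'supp, hq'pos, hq'1, hq'x⟩
  obtain ⟨q', hq'supp, h₂0, h₂1, hx₁₂'⟩ := hq'ex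
  set x₂ : ℝ := q'.2 / (1 - q'.1) with hx₂def
  have hx₁₂ : x₁ < x₂ := hx₁₂'
  have hSclosed : IsClosed (mSupport (Measure.map X P)) := mSupport_isClosed
  obtain ⟨s₀, hs₀⟩ : (mSupport (Measure.map X P)).Nonempty := mSupport_nonempty
  have hfS : ∀ x ∈ mSupport (Measure.map X P), p.1 * x + p.2 ∈ mSupport (Measure.map X P) :=
    fun x hx => invariance_step hAm hBm hXm hindep hstat hp hx
  have hgS : ∀ x ∈ mSupport (Measure.map X P), q'.1 * x + q'.2 ∈ mSupport (Measure.map X P) :=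
    fun x hx => invariance_step hAm hBm hXm hindep hstat hq'supp hx
  -- fixed point identities
  have hne₁ : (1:ℝ) - p.1 ≠ 0 := sub_ne_zero.2 (ne_of_lt hp1)
  have hne₂ : (1:ℝ) - q'.1 ≠ 0 := sub_ne_zero.2 (ne_of_gt h₂1)
  have hfp : x₁ * (1 - p.1) = p.2 := by rw [hx₁def]; exact div_mul_cancel₀ p.2 hne₁
  have hfq : x₂ * (1 - q'.1) = q'.2 := by rw [hx₂def]; exact div_mul_cancel₀ q'.2 hne₂
  -- `x₂` belongs to the support
  have hx₂S : x₂ ∈ mSupport (Measure.map X P) := by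
    have hmem : ∀ n : ℕ, x₂ + q'.1 ^ n * (s₀ - x₂) ∈ mSupport (Measure.map X P) := by
      intro n
      induction n with
      | zero => simpa using hs₀
      | succ n ih =>
        have hstep := hgS _ ih
        have heq : q'.1 * (x₂ + q'.1 ^ n * (s₀ - x₂)) + q'.2
            = x₂ + q'.1 ^ (n+1) * (s₀ - x₂) := by linear_combination -hfq
        rwa [heq] at hstep
    have htend : Tendsto (fun n : ℕ => x₂ + q'.1 ^ n * (s₀ - x₂)) atTop (nhds x₂) := by
      have h0 : Tendsto (fun n : ℕ => q'.1 ^ n) atTop (nhds 0) :=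
        tendsto_pow_atTop_nhds_zero_of_lt_one h₂0.le h₂1
      have := (h0.mul_const (s₀ - x₂)).const_add x₂
      simpa using this
    exact hSclosed.mem_of_tendsto htend (Filter.Eventually.of_forall hmem)
  -- translate to the normalized orbit and apply the density lemma
  have hd : 0 < x₂ - x₁ := sub_pos.2 hx₁₂
  set O : Set ℝ := {u : ℝ | x₁ + (x₂ - x₁) * u ∈ mSupport (Measure.map X P)} with hOdef
  have h1O : (1:ℝ) ∈ O := by
    have h : x₁ + (x₂ - x₁) * 1 = x₂ := by ring
    show x₁ + (x₂ - x₁) * 1 ∈ mSupport (Measure.map X P)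
    rw [h]; exact hx₂S
  have hfO : ∀ u ∈ O, p.1 * u ∈ O := by
    intro u hu
    have hstep := hfS _ hu
    have heq : p.1 * (x₁ + (x₂ - x₁) * u) + p.2 = x₁ + (x₂ - x₁) * (p.1 * u) := by
      linear_combination -hfp
    show x₁ + (x₂ - x₁) * (p.1 * u) ∈ mSupport (Measure.map X P)
    rwa [heq] at hstep
  have hgO : ∀ u ∈ O, q'.1 * u + (1 - q'.1) ∈ O := by
    intro u hu
    have hstep := hgS _ hu
    have heq : q'.1 * (x₁ + (x₂ - x₁) * u) + q'.2
        = x₁ + (x₂ - x₁) * (q'.1 * u + (1 - q'.1)) := by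
      linear_combination -hfq
    show x₁ + (x₂ - x₁) * (q'.1 * u + (1 - q'.1)) ∈ mSupport (Measure.map X P)
    rwa [heq] at hstep
  refine ⟨x₂, fun y hy => ?_⟩
  have hyx₂ : x₂ ≤ y := hy
  rw [← hSclosed.closure_eq]
  rw [Metric.mem_closure_iff]
  intro ε hε
  set uy : ℝ := (y - x₁) / (x₂ - x₁) with huydef
  have huy1 : 1 ≤ uy := by
    rw [huydef, le_div_iff₀ hd]; linarith
  obtain ⟨u, huO, hul, hur⟩ := core_dense hp1 h₂0 h₂1 h1O hfO hgO uy
    (uy + ε / (x₂ - x₁)) huy1 (lt_add_of_pos_right _ (div_pos hε hd))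
  refine ⟨x₁ + (x₂ - x₁) * u, huO, ?_⟩
  have hyeq : y = x₁ + (x₂ - x₁) * uy := by
    rw [huydef]; field_simp; ring
  rw [Real.dist_eq, hyeq]
  have habs : |x₁ + (x₂ - x₁) * uy - (x₁ + (x₂ - x₁) * u)| = (x₂ - x₁) * (u - uy) := by
    rw [abs_of_nonpos (by nlinarith)]; ring
  rw [habs]
  have hlt : u - uy < ε / (x₂ - x₁) := by linarith
  calc (x₂ - x₁) * (u - uy) < (x₂ - x₁) * (ε / (x₂ - x₁)) :=
        mul_lt_mul_of_pos_left hlt hd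
  _ = ε := by field_simp
end

section
/- Let (A,B) be a random pair in (0,∞)×ℝ with E[log A] < 0 and E[log⁺|B|] < ∞, and let ν be the law of the stationary solution X of X =_d AX + B. If P[A = 1, B > 0] > 0, then the support of ν is unbounded at +∞, i.e. ν((s,∞)) > 0 for every s ∈ ℝ. -/
open MeasureTheory ProbabilityTheory Filter Set

/-- If `P[A = 1, B > 0] > 0` then the stationary law of the affine recursion is unbounded
at `+∞`. -/
theorem stmt_7
    {Ω : Type*} [MeasurableSpace Ω] (P : Measure Ω) [IsProbabilityMeasure P]
    (A B X : Ω → ℝ) (hAm : Measurable A) (hBm : Measurable B) (hXm : Measurable X)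
    (hApos : ∀ᵐ ω ∂P, 0 < A ω)
    (hlogA_int : Integrable (fun ω => Real.log (A ω)) P)
    (hlogA_neg : ∫ ω, Real.log (A ω) ∂P < 0)
    (hlogB : ∫⁻ ω, ENNReal.ofReal (max (Real.log |B ω|) 0) ∂P < ⊤)
    (hindep : IndepFun (fun ω => (A ω, B ω)) X P)
    (hstat : Measure.map X P = Measure.map (fun ω => A ω * X ω + B ω) P)
    (hA1B : 0 < P {ω | A ω = 1 ∧ 0 < B ω}) :
    ∀ s : ℝ, 0 < Measure.map X P (Set.Ioi s) := by
  -- Step 1: find δ > 0 with positive probability of {A = 1, B ≥ δ}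
  obtain ⟨δ, hδpos, hq⟩ : ∃ δ : ℝ, 0 < δ ∧ 0 < P {ω | A ω = 1 ∧ δ ≤ B ω} := by
    by_contra h
    push_neg at h
    have hz : P {ω | A ω = 1 ∧ 0 < B ω} = 0 := by
      have hsub : {ω | A ω = 1 ∧ 0 < B ω} ⊆
          ⋃ n : ℕ, {ω | A ω = 1 ∧ (1 : ℝ) / (n + 1) ≤ B ω} := by
        rintro ω ⟨h1, h2⟩
        obtain ⟨n, hn⟩ := exists_nat_one_div_lt h2
        exact mem_iUnion.2 ⟨n, h1, hn.le⟩
      refine le_antisymm ((measure_mono hsub).trans ?_) zero_le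
      refine le_of_eq (measure_iUnion_null fun n => le_antisymm (h _ (by positivity)) zero_le)
    exact absurd hz hA1B.ne'
  -- abbreviation for measurability of the target set
  have hS : MeasurableSet {p : ℝ × ℝ | p.1 = 1 ∧ δ ≤ p.2} :=
    (measurable_fst (measurableSet_singleton 1)).inter (measurable_snd measurableSet_Ici)
  -- Step 2: the key inequality
  have key : ∀ s : ℝ, P {ω | A ω = 1 ∧ δ ≤ B ω} * Measure.map X P (Ioi (s - δ)) ≤
      Measure.map X P (Ioi s) := by
    intro s
    have hmap1 : Measure.map X P (Ioi s) = P ((fun ω => A ω * X ω + B ω) ⁻¹' Ioi s) := by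
      rw [hstat, Measure.map_apply (f := fun ω => A ω * X ω + B ω) ((hAm.mul hXm).add hBm) measurableSet_Ioi]
    have hmap2 : Measure.map X P (Ioi (s - δ)) = P (X ⁻¹' Ioi (s - δ)) :=
      Measure.map_apply hXm measurableSet_Ioi
    have hind := hindep.measure_inter_preimage_eq_mul
      {p : ℝ × ℝ | p.1 = 1 ∧ δ ≤ p.2} (Ioi (s - δ)) hS measurableSet_Ioi
    have hsub : (fun ω => (A ω, B ω)) ⁻¹' {p : ℝ × ℝ | p.1 = 1 ∧ δ ≤ p.2} ∩
        X ⁻¹' Ioi (s - δ) ⊆ (fun ω => A ω * X ω + B ω) ⁻¹' Ioi s := by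
      rintro ω ⟨⟨h1, h2⟩, h3⟩
      simp only [mem_preimage, mem_Ioi] at *
      rw [h1, one_mul]
      linarith
    have hpre : {ω | A ω = 1 ∧ δ ≤ B ω} =
        (fun ω => (A ω, B ω)) ⁻¹' {p : ℝ × ℝ | p.1 = 1 ∧ δ ≤ p.2} := rfl
    rw [hmap1, hmap2, hpre, ← hind]
    exact measure_mono hsub
  -- Step 3: some tail has positive mass
  have hbase : ∃ t : ℝ, 0 < Measure.map X P (Ioi t) := by
    by_contra h
    push_neg at h
    have huniv : (univ : Set ℝ) ⊆ ⋃ n : ℕ, Ioi (-(n : ℝ)) := by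
      intro x _
      obtain ⟨n, hn⟩ := exists_nat_gt (-x)
      exact mem_iUnion.2 ⟨n, by simpa using neg_lt_of_neg_lt hn⟩
    have h1 : Measure.map X P univ = 1 := by
      rw [Measure.map_apply hXm MeasurableSet.univ]
      simp
    have h0 : Measure.map X P univ = 0 := by
      refine le_antisymm ((measure_mono huniv).trans ?_) zero_le
      exact le_of_eq (measure_iUnion_null fun n => le_antisymm (h _) zero_le)
    rw [h1] at h0
    exact one_ne_zero h0
  obtain ⟨t, ht⟩ := hbase
  -- Step 4: induction along steps of size δ
  have hn : ∀ n : ℕ, 0 < Measure.map X P (Ioi (t + n * δ)) := by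
    intro n
    induction n with
    | zero => simpa using ht
    | succ n ih =>
      have hkey := key (t + (n + 1 : ℕ) * δ)
      have harg : t + (n + 1 : ℕ) * δ - δ = t + n * δ := by push_cast; ring
      rw [harg] at hkey
      exact lt_of_lt_of_le (ENNReal.mul_pos hq.ne' ih.ne') hkey
  intro s
  obtain ⟨n, hnn⟩ := exists_nat_gt ((s - t) / δ)
  have hle : s ≤ t + n * δ := by
    have := (div_lt_iff₀ hδpos).1 hnn
    linarith
  exact lt_of_lt_of_le (hn n) (measure_mono (Ioi_subset_Ioi hle))
end

section
/- Let μ̃ be the law of a triple (A,B,C) supported on the two points (3, 1, −1) and (1/2, −1, 0) with probabilities p and 1−p respectively, where 0 < p and p·log 3 + (1−p)·log(1/2) < 0. Then P[A > 1, B > 0] = p > 0, yet the stationary solution X̃ of the Letac recursion X̃_n = max{A_n X̃_{n−1} + B_n, A_n C_n + B_n} satisfies X̃ ≤ −1 almost surely; in particular lim_{t→∞} t^α P[X̃ > t] = 0 for every α > 0. -/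
open MeasureTheory ProbabilityTheory Filter Set

/-- **Counterexample.** For the two-point law supported on `(3,1,-1)` and `(1/2,-1,0)` with
probabilities `p` and `1-p` (with `p log 3 + (1-p) log (1/2) < 0`), one has
`P[A > 1, B > 0] = p > 0`, yet the stationary solution of the Letac recursion satisfies
`X̃ ≤ -1` a.s.; in particular `t^α P[X̃ > t] → 0` for every `α > 0`. -/
theorem stmt_9
    {Ω : Type*} [MeasurableSpace Ω] (P : Measure Ω) [IsProbabilityMeasure P]
    (A B C X : Ω → ℝ) (hAm : Measurable A) (hBm : Measurable B) (hCm : Measurable C)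
    (hXm : Measurable X)
    (p : ℝ) (hp : 0 < p)
    (h1 : P {ω | (A ω, B ω, C ω) = ((3 : ℝ), (1 : ℝ), (-1 : ℝ))} = ENNReal.ofReal p)
    (h2 : P {ω | (A ω, B ω, C ω) = ((1/2 : ℝ), (-1 : ℝ), (0 : ℝ))} = ENNReal.ofReal (1 - p))
    (hlog : p * Real.log 3 + (1 - p) * Real.log (1/2) < 0)
    (hindep : IndepFun (fun ω => (A ω, B ω, C ω)) X P)
    (hstat : Measure.map X P
      = Measure.map (fun ω => max (A ω * X ω + B ω) (A ω * C ω + B ω)) P) :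
    (P {ω | 1 < A ω ∧ 0 < B ω} = ENNReal.ofReal p ∧ 0 < P {ω | 1 < A ω ∧ 0 < B ω}) ∧
    (∀ᵐ ω ∂P, X ω ≤ -1) ∧
    (∀ α : ℝ, 0 < α →
      Tendsto (fun t : ℝ => t ^ α * (P {ω | X ω > t}).toReal) atTop (nhds 0)) := by
  have hfm : Measurable (fun ω => (A ω, B ω, C ω)) := hAm.prodMk (hBm.prodMk hCm)
  set S1 : Set Ω := {ω | (A ω, B ω, C ω) = ((3 : ℝ), (1 : ℝ), (-1 : ℝ))} with hS1def
  set S2 : Set Ω := {ω | (A ω, B ω, C ω) = ((1/2 : ℝ), (-1 : ℝ), (0 : ℝ))} with hS2def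
  have hS1m : MeasurableSet S1 := hfm (measurableSet_singleton _)
  have hS2m : MeasurableSet S2 := hfm (measurableSet_singleton _)
  -- p < 1
  have hl3 : 0 < Real.log 3 := Real.log_pos (by norm_num)
  have hl2 : Real.log (1/2 : ℝ) < 0 := Real.log_neg (by norm_num) (by norm_num)
  have hp1 : p < 1 := by
    by_contra h
    push_neg at h
    nlinarith
  -- disjointness
  have hdisj : Disjoint S1 S2 := by
    rw [Set.disjoint_left]
    intro ω hω1 hω2
    simp only [hS1def, hS2def, mem_setOf_eq, Prod.mk.injEq] at hω1 hω2
    have := hω1.1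
    have := hω2.1
    norm_num at *
    linarith [hω1.1, hω2.1]
  -- P (S1 ∪ S2) = 1
  have hunion : P (S1 ∪ S2) = 1 := by
    rw [measure_union hdisj hS2m, h1, h2,
      ← ENNReal.ofReal_add hp.le (by linarith)]
    norm_num
  have hcompl : P ((S1 ∪ S2)ᶜ) = 0 := by
    rw [measure_compl (hS1m.union hS2m) (measure_ne_top _ _), hunion, measure_univ]
    simp
  -- decomposition of any measurable set
  have hsplit : ∀ E : Set Ω, MeasurableSet E → P E = P (E ∩ S1) + P (E ∩ S2) := by
    intro E hE
    have hdiff : P (E \ (S1 ∪ S2)) = 0 :=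
      measure_mono_null (fun ω hω => hω.2) hcompl
    have h0 : P E = P (E ∩ (S1 ∪ S2)) := by
      rw [← measure_inter_add_diff E (hS1m.union hS2m), hdiff, add_zero]
    rw [h0, inter_union_distrib_left]
    exact measure_union (hdisj.mono inter_subset_right inter_subset_right) (hE.inter hS2m)
  -- independence
  have hind1 : ∀ s : ℝ, P (S1 ∩ {ω | X ω ≤ s}) = ENNReal.ofReal p * P {ω | X ω ≤ s} := by
    intro s
    have h := hindep.measure_inter_preimage_eq_mul {((3:ℝ),(1:ℝ),(-1:ℝ))} (Iic s)
      (measurableSet_singleton _) measurableSet_Iic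
    have hsA : (fun ω => (A ω, B ω, C ω)) ⁻¹' {((3:ℝ),(1:ℝ),(-1:ℝ))} = S1 := rfl
    have hsX : X ⁻¹' Iic s = {ω | X ω ≤ s} := rfl
    rw [hsA, hsX] at h
    rw [h, h1]
  have hind2 : ∀ s : ℝ, P (S2 ∩ {ω | X ω ≤ s}) = ENNReal.ofReal (1-p) * P {ω | X ω ≤ s} := by
    intro s
    have h := hindep.measure_inter_preimage_eq_mul {((1/2:ℝ),(-1:ℝ),(0:ℝ))} (Iic s)
      (measurableSet_singleton _) measurableSet_Iic
    have hsA : (fun ω => (A ω, B ω, C ω)) ⁻¹' {((1/2:ℝ),(-1:ℝ),(0:ℝ))} = S2 := rfl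
    have hsX : X ⁻¹' Iic s = {ω | X ω ≤ s} := rfl
    rw [hsA, hsX] at h
    rw [h, h2]
  -- the key one-step equation
  have hYm : Measurable (fun ω => max (A ω * X ω + B ω) (A ω * C ω + B ω)) :=
    ((hAm.mul hXm).add hBm).max ((hAm.mul hCm).add hBm)
  have hkey : ∀ t : ℝ, -1 ≤ t →
      P {ω | X ω ≤ t} = ENNReal.ofReal p * P {ω | X ω ≤ (t-1)/3}
        + ENNReal.ofReal (1-p) * P {ω | X ω ≤ 2*(t+1)} := by
    intro t ht
    have hXY : P {ω | X ω ≤ t}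
        = P {ω | max (A ω * X ω + B ω) (A ω * C ω + B ω) ≤ t} := by
      calc P {ω | X ω ≤ t} = Measure.map X P (Iic t) :=
            (Measure.map_apply hXm measurableSet_Iic).symm
        _ = Measure.map (fun ω => max (A ω * X ω + B ω) (A ω * C ω + B ω)) P (Iic t) := by
            rw [hstat]
        _ = P {ω | max (A ω * X ω + B ω) (A ω * C ω + B ω) ≤ t} :=
            Measure.map_apply hYm measurableSet_Iic
    have e1 : {ω | max (A ω * X ω + B ω) (A ω * C ω + B ω) ≤ t} ∩ S1
        = S1 ∩ {ω | X ω ≤ (t-1)/3} := by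
      ext ω
      simp only [hS1def, mem_inter_iff, mem_setOf_eq, Prod.mk.injEq, max_le_iff]
      constructor
      · rintro ⟨⟨hy1, hy2⟩, hA, hB, hC⟩
        rw [hA, hB] at hy1
        exact ⟨⟨hA, hB, hC⟩, by linarith⟩
      · rintro ⟨⟨hA, hB, hC⟩, hx⟩
        refine ⟨⟨?_, ?_⟩, hA, hB, hC⟩ <;> rw [hA, hB] <;> [skip; rw [hC]] <;> linarith
    have e2 : {ω | max (A ω * X ω + B ω) (A ω * C ω + B ω) ≤ t} ∩ S2
        = S2 ∩ {ω | X ω ≤ 2*(t+1)} := by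
      ext ω
      simp only [hS2def, mem_inter_iff, mem_setOf_eq, Prod.mk.injEq, max_le_iff]
      constructor
      · rintro ⟨⟨hy1, hy2⟩, hA, hB, hC⟩
        rw [hA, hB] at hy1
        exact ⟨⟨hA, hB, hC⟩, by linarith⟩
      · rintro ⟨⟨hA, hB, hC⟩, hx⟩
        refine ⟨⟨?_, ?_⟩, hA, hB, hC⟩ <;> rw [hA, hB] <;> [skip; rw [hC]] <;> linarith
    have hEm : MeasurableSet {ω | max (A ω * X ω + B ω) (A ω * C ω + B ω) ≤ t} :=
      hYm measurableSet_Iic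
    rw [hXY, hsplit _ hEm, e1, e2, hind1, hind2]
  -- monotonicity
  have hmono : ∀ s u : ℝ, s ≤ u → P {ω | X ω ≤ s} ≤ P {ω | X ω ≤ u} :=
    fun s u h => measure_mono (fun ω hω => le_trans hω h)
  -- iteration : P {X ≤ 2^n - 2} = P {X ≤ -1}
  have hiter : ∀ n : ℕ, P {ω | X ω ≤ (2:ℝ)^n - 2} = P {ω | X ω ≤ -1} := by
    intro n
    induction n with
    | zero => norm_num
    | succ n ih =>
      have hpow : (1:ℝ) ≤ 2^n := one_le_pow₀ (by norm_num)
      have hk := hkey ((2:ℝ)^n - 2) (by linarith)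
      rw [ih] at hk
      rw [show (2:ℝ)*((2:ℝ)^n - 2 + 1) = 2^(n+1) - 2 by ring] at hk
      have ha : P {ω | X ω ≤ -1} ≤ P {ω | X ω ≤ ((2:ℝ)^n - 2 - 1)/3} :=
        hmono _ _ (by nlinarith)
      have hb : P {ω | X ω ≤ -1} ≤ P {ω | X ω ≤ (2:ℝ)^(n+1) - 2} :=
        hmono _ _ (by rw [pow_succ]; nlinarith)
      -- pass to real numbers
      set r := (P {ω | X ω ≤ -1}).toReal with hr
      set a := (P {ω | X ω ≤ ((2:ℝ)^n - 2 - 1)/3}).toReal with hadef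
      set b := (P {ω | X ω ≤ (2:ℝ)^(n+1) - 2}).toReal with hbdef
      have hk' : r = p * a + (1-p) * b := by
        rw [hr, hk, ENNReal.toReal_add (by finiteness) (by finiteness),
          ENNReal.toReal_mul, ENNReal.toReal_mul, ENNReal.toReal_ofReal hp.le,
          ENNReal.toReal_ofReal (by linarith)]
      have ha' : r ≤ a := ENNReal.toReal_le_toReal (measure_ne_top _ _) (measure_ne_top _ _)
        |>.mpr ha
      have hb' : r ≤ b := ENNReal.toReal_le_toReal (measure_ne_top _ _) (measure_ne_top _ _)
        |>.mpr hb
      have hble : b ≤ r := by nlinarith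
      refine le_antisymm ?_ hb
      exact (ENNReal.toReal_le_toReal (measure_ne_top _ _) (measure_ne_top _ _)).mp hble
  -- P {X ≤ -1} = 1
  have hr1 : P {ω | X ω ≤ -1} = 1 := by
    have hmonoSet : Monotone (fun n : ℕ => {ω | X ω ≤ (2:ℝ)^n - 2}) := by
      intro m n hmn ω hω
      have : (2:ℝ)^m ≤ 2^n := pow_le_pow_right₀ (by norm_num) hmn
      simp only [mem_setOf_eq] at *
      linarith
    have hU : (⋃ n : ℕ, {ω | X ω ≤ (2:ℝ)^n - 2}) = univ := by
      ext ω
      simp only [mem_iUnion, mem_setOf_eq, mem_univ, iff_true]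
      obtain ⟨n, hn⟩ := pow_unbounded_of_one_lt (X ω + 2) (by norm_num : (1:ℝ) < 2)
      exact ⟨n, by linarith⟩
    have hT := tendsto_measure_iUnion_atTop (μ := P) hmonoSet
    rw [hU, measure_univ] at hT
    have hT' : Tendsto (P ∘ fun n : ℕ => {ω | X ω ≤ (2:ℝ)^n - 2}) atTop
        (nhds (P {ω | X ω ≤ -1})) := by
      have : (P ∘ fun n : ℕ => {ω | X ω ≤ (2:ℝ)^n - 2})
          = fun _ : ℕ => P {ω | X ω ≤ -1} := funext fun n => hiter n
      rw [this]
      exact tendsto_const_nhds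
    exact (tendsto_nhds_unique hT' hT)
  have hnull : P {ω | ¬ X ω ≤ -1} = 0 := by
    have h0 : {ω | ¬ X ω ≤ -1} = {ω | X ω ≤ -1}ᶜ := rfl
    have hsm : MeasurableSet {ω | X ω ≤ -1} := hXm measurableSet_Iic
    rw [h0, measure_compl hsm (measure_ne_top _ _), hr1, measure_univ]
    simp
  have hae : ∀ᵐ ω ∂P, X ω ≤ -1 := by
    rw [ae_iff]
    exact hnull
  refine ⟨?_, hae, ?_⟩
  · -- part 1
    have hGm : MeasurableSet {ω | 1 < A ω ∧ 0 < B ω} :=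
      (measurableSet_lt measurable_const hAm).inter (measurableSet_lt measurable_const hBm)
    have e1 : {ω | 1 < A ω ∧ 0 < B ω} ∩ S1 = S1 := by
      rw [inter_eq_right]
      intro ω hω
      simp only [hS1def, mem_setOf_eq, Prod.mk.injEq] at hω
      simp only [mem_setOf_eq, hω.1, hω.2.1]
      norm_num
    have e2 : {ω | 1 < A ω ∧ 0 < B ω} ∩ S2 = ∅ := by
      ext ω
      simp only [mem_inter_iff, mem_setOf_eq, mem_empty_iff_false, iff_false, not_and]
      rintro ⟨hA, _⟩ hS
      have hA' : A ω = 1/2 := congrArg Prod.fst hS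
      rw [hA'] at hA
      norm_num at hA
    have hPG : P {ω | 1 < A ω ∧ 0 < B ω} = ENNReal.ofReal p := by
      rw [hsplit _ hGm, e1, e2, h1, measure_empty, add_zero]
    exact ⟨hPG, by rw [hPG]; exact ENNReal.ofReal_pos.mpr hp⟩
  · -- part 3
    intro α hα
    have h0 : ∀ᶠ t : ℝ in atTop, t ^ α * (P {ω | X ω > t}).toReal = 0 := by
      filter_upwards [eventually_ge_atTop (0:ℝ)] with t ht
      have hsub : {ω | X ω > t} ⊆ {ω | ¬ X ω ≤ -1} := by
        intro ω hω
        simp only [mem_setOf_eq] at *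
        push_neg
        linarith
      rw [measure_mono_null hsub hnull]
      simp
    exact Tendsto.congr' (EventuallyEq.symm h0) tendsto_const_nhds
end

section
/- Let Ψ : Θ × ℝ → ℝ be jointly measurable, Lipschitz in the second variable, with E[log L(Ψ)] < 0 and E[log⁺|Ψ(ω,0)|] < ∞, and suppose Ψ(ω,x) ≥ A(ω)x + B(ω) for all x a.s., with A > 0, E[log A] < 0, E[log⁺|B|] < ∞. Let Y = lim_{n→∞} Ψ(ω₁,·)∘⋯∘Ψ(ω_n,·)(x) be the a.s. limit of the backward iteration (which exists and does not depend on x), let Π_n = A₁⋯A_n, Ȳ_n = Σ_{k=1}^n Π_{k−1} B_k, and let θ denote the shift (ω₁,ω₂,…) ↦ (ω₂,ω₃,…). Then for every n, Y ≥ Ȳ_n + Π_n · Y(θⁿω) almost surely; in particular Y ≥ Ȳ = Σ_{k=1}^∞ Π_{k−1} B_k almost surely. -/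
open MeasureTheory ProbabilityTheory Filter Set

/-- Backward iteration `Ψ_{1,n}(x) = Ψ(ω₀, ·) ∘ ⋯ ∘ Ψ(ω_{n-1}, ·) (x)` of an IFS read off
the coordinates of `ω : ℕ → Θ`. -/
def backIter {Θ : Type*} (Ψ : Θ × ℝ → ℝ) (ω : ℕ → Θ) : ℕ → ℝ → ℝ
  | 0, x => x
  | n + 1, x => backIter Ψ ω n (Ψ (ω n, x))

lemma backIter_ge {Θ : Type*} (Ψ : Θ × ℝ → ℝ) (A B : Θ → ℝ) (hApos : ∀ θ, 0 < A θ)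
    (ω : ℕ → Θ) (hdom : ∀ k x, A (ω k) * x + B (ω k) ≤ Ψ (ω k, x)) :
    ∀ n x, (∑ k ∈ Finset.range n, (∏ j ∈ Finset.range k, A (ω j)) * B (ω k))
      + (∏ j ∈ Finset.range n, A (ω j)) * x ≤ backIter Ψ ω n x := by
  intro n
  induction n with
  | zero => intro x; simp [backIter]
  | succ n ih =>
    intro x
    have hPi : (0:ℝ) < ∏ j ∈ Finset.range n, A (ω j) :=
      Finset.prod_pos fun j _ => hApos _
    have h1 := ih (Ψ (ω n, x))
    have h2 : (∏ j ∈ Finset.range n, A (ω j)) * (A (ω n) * x + B (ω n))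
        ≤ (∏ j ∈ Finset.range n, A (ω j)) * Ψ (ω n, x) :=
      mul_le_mul_of_nonneg_left (hdom n x) hPi.le
    have h3 : backIter Ψ ω (n+1) x = backIter Ψ ω n (Ψ (ω n, x)) := rfl
    rw [h3, Finset.sum_range_succ, Finset.prod_range_succ]
    nlinarith [h1, h2]

lemma backIter_add {Θ : Type*} (Ψ : Θ × ℝ → ℝ) (ω : ℕ → Θ) (n : ℕ) :
    ∀ m x, backIter Ψ ω (m + n) x
      = backIter Ψ ω n (backIter Ψ (fun k => ω (k + n)) m x) := by
  intro m
  induction m with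
  | zero => intro x; simp [backIter]
  | succ m ih =>
    intro x
    have h : m + 1 + n = (m + n) + 1 := by omega
    rw [h]
    show backIter Ψ ω (m + n) (Ψ (ω (m+n), x)) = _
    rw [ih]
    rfl

lemma jointLaw_pi {Θ : Type*} [MeasurableSpace Θ]
    (P : Measure (ℕ → Θ)) [IsProbabilityMeasure P]
    (hiid : iIndepFun (fun n (ω : ℕ → Θ) => ω n) P)
    (hident : ∀ n, Measure.map (fun ω : ℕ → Θ => ω n) P
      = Measure.map (fun ω : ℕ → Θ => ω 0) P)
    (s : Finset ℕ) (g : ℕ → ℕ) (hg : Function.Injective g) :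
    Measure.map (fun (ω : ℕ → Θ) (i : s) => ω (g i)) P
      = Measure.pi (fun _ : s => Measure.map (fun ω : ℕ → Θ => ω 0) P) := by
  haveI : IsProbabilityMeasure (Measure.map (fun ω : ℕ → Θ => ω 0) P) :=
    Measure.isProbabilityMeasure_map (measurable_pi_apply 0).aemeasurable
  refine (Measure.pi_eq fun t ht => ?_).symm
  have hF : Measurable (fun (ω : ℕ → Θ) (i : s) => ω (g i)) :=
    measurable_pi_lambda _ fun i => measurable_pi_apply (g i)
  rw [Measure.map_apply hF (MeasurableSet.univ_pi ht)]
  classical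
  set sets : ℕ → Set Θ := fun m => ⋂ (i : s) (_ : g i = m), t i with hsets
  have hsets_m : ∀ m, MeasurableSet (sets m) := fun m =>
    MeasurableSet.iInter fun i => MeasurableSet.iInter fun _ => ht i
  have hset_eq : (fun (ω : ℕ → Θ) (i : s) => ω (g i)) ⁻¹' (univ.pi t)
      = ⋂ m ∈ s.image g, (fun ω : ℕ → Θ => ω m) ⁻¹' sets m := by
    ext ω
    simp only [mem_preimage, Set.mem_pi, mem_univ, forall_true_left, mem_iInter,
      Finset.mem_image, hsets, forall_exists_index, and_imp]
    constructor
    · rintro h m i hi rfl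
      rintro ⟨j, hj⟩ hgj
      have hji : (⟨j, hj⟩ : s) = ⟨i, hi⟩ := Subtype.ext (hg hgj)
      rw [hji]
      exact h ⟨i, hi⟩
    · intro h i
      exact h (g i) i i.2 rfl i rfl
  rw [hset_eq]
  rw [hiid.measure_inter_preimage_eq_mul (s.image g) (fun m _ => hsets_m m)]
  rw [Finset.prod_image (fun a _ b _ hab => hg hab),
      ← Finset.prod_attach s (fun m => P ((fun ω : ℕ → Θ => ω (g m)) ⁻¹' sets (g m))),
      Finset.univ_eq_attach]
  refine Finset.prod_congr rfl fun i _ => ?_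
  have hseq : sets (g ↑i) = t i := by
    apply Subset.antisymm
    · exact iInter_subset_of_subset i (by simp)
    · intro x hx
      simp only [hsets, mem_iInter]
      rintro j hgj
      have hji : j = i := Subtype.ext (hg hgj)
      rw [hji]; exact hx
  rw [hseq, ← Measure.map_apply (measurable_pi_apply (g ↑i)) (ht _), hident (g ↑i)]

lemma shift_invariant {Θ : Type*} [MeasurableSpace Θ]
    (P : Measure (ℕ → Θ)) [IsProbabilityMeasure P]
    (hiid : iIndepFun (fun n (ω : ℕ → Θ) => ω n) P)
    (hident : ∀ n, Measure.map (fun ω : ℕ → Θ => ω n) P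
      = Measure.map (fun ω : ℕ → Θ => ω 0) P)
    (n : ℕ) :
    Measure.map (fun (ω : ℕ → Θ) (k : ℕ) => ω (k + n)) P = P := by
  have hθ : Measurable (fun (ω : ℕ → Θ) (k : ℕ) => ω (k + n)) :=
    measurable_pi_lambda _ fun k => measurable_pi_apply (k + n)
  haveI : IsProbabilityMeasure (Measure.map (fun (ω : ℕ → Θ) (k : ℕ) => ω (k + n)) P) :=
    Measure.isProbabilityMeasure_map hθ.aemeasurable
  refine ext_of_generate_finite (measurableCylinders (fun _ : ℕ => Θ))
    generateFrom_measurableCylinders.symm isPiSystem_measurableCylinders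
    (fun t ht => ?_) (by simp)
  obtain ⟨s, S, hS, rfl⟩ := (mem_measurableCylinders t).mp ht
  rw [Measure.map_apply hθ (MeasurableSet.cylinder s hS)]
  have h1 : (fun (ω : ℕ → Θ) (k : ℕ) => ω (k + n)) ⁻¹' cylinder s S
      = (fun (ω : ℕ → Θ) (i : s) => ω (↑i + n)) ⁻¹' S := rfl
  have h2 : cylinder s S = (fun (ω : ℕ → Θ) (i : s) => ω (↑i : ℕ)) ⁻¹' S := rfl
  rw [h1, h2,
    ← Measure.map_apply (measurable_pi_lambda _ fun i : s => measurable_pi_apply ((i:ℕ) + n)) hS,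
    ← Measure.map_apply (measurable_pi_lambda _ fun i : s => measurable_pi_apply (i:ℕ)) hS,
    jointLaw_pi P hiid hident s (fun k => k + n) (add_left_injective n),
    jointLaw_pi P hiid hident s (fun k => k) (fun a b h => h)]

/-- **Step 1 of the main lemma.** The backward limit `Y` of an IFS dominating an affine
recursion satisfies `Y(ω) ≥ Ȳ_n(ω) + Π_n(ω) · Y(θⁿ ω)` for every `n`, and in particular
`Y ≥ Ȳ = Σ Π_{k-1} B_k` a.s. -/
theorem stmt_15
    {Θ : Type*} [MeasurableSpace Θ]
    (P : Measure (ℕ → Θ)) [IsProbabilityMeasure P]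
    (hiid : iIndepFun (fun n (ω : ℕ → Θ) => ω n) P)
    (hident : ∀ n, Measure.map (fun ω : ℕ → Θ => ω n) P
      = Measure.map (fun ω : ℕ → Θ => ω 0) P)
    (Ψ : Θ × ℝ → ℝ) (hΨm : Measurable Ψ)
    (L : Θ → ℝ) (hLm : Measurable L)
    (hLip : ∀ θ x y, |Ψ (θ, x) - Ψ (θ, y)| ≤ L θ * |x - y|)
    (hlogL_int : Integrable (fun ω : ℕ → Θ => Real.log (L (ω 0))) P)
    (hlogL_neg : ∫ ω, Real.log (L (ω 0)) ∂P < 0)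
    (hΨ0 : ∫⁻ ω, ENNReal.ofReal (max (Real.log |Ψ (ω 0, 0)|) 0) ∂P < ⊤)
    (A B : Θ → ℝ) (hAm : Measurable A) (hBm : Measurable B)
    (hApos : ∀ θ, 0 < A θ)
    (hdom : ∀ᵐ ω ∂P, ∀ n : ℕ, ∀ x : ℝ, A (ω n) * x + B (ω n) ≤ Ψ (ω n, x))
    (hlogA_int : Integrable (fun ω : ℕ → Θ => Real.log (A (ω 0))) P)
    (hlogA_neg : ∫ ω, Real.log (A (ω 0)) ∂P < 0)
    (hlogB : ∫⁻ ω, ENNReal.ofReal (max (Real.log |B (ω 0)|) 0) ∂P < ⊤)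
    (Y : (ℕ → Θ) → ℝ) (hYm : Measurable Y)
    (hY : ∀ x : ℝ, ∀ᵐ ω ∂P, Tendsto (fun n => backIter Ψ ω n x) atTop (nhds (Y ω))) :
    (∀ n : ℕ, ∀ᵐ ω ∂P,
      (∑ k ∈ Finset.range n, (∏ j ∈ Finset.range k, A (ω j)) * B (ω k))
        + (∏ j ∈ Finset.range n, A (ω j)) * Y (fun k => ω (k + n)) ≤ Y ω) ∧
    (∀ᵐ ω ∂P, (∑' k : ℕ, (∏ j ∈ Finset.range k, A (ω j)) * B (ω k)) ≤ Y ω) := by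
  have hY0 := hY 0
  -- identical distribution of coordinate functionals
  have hid : ∀ (g : Θ → ℝ), Measurable g → ∀ i,
      IdentDistrib (fun ω : ℕ → Θ => g (ω i)) (fun ω : ℕ → Θ => g (ω 0)) P P := by
    intro g hg i
    refine ⟨(hg.comp (measurable_pi_apply i)).aemeasurable,
      (hg.comp (measurable_pi_apply 0)).aemeasurable, ?_⟩
    calc Measure.map (fun ω : ℕ → Θ => g (ω i)) P
        = Measure.map g (Measure.map (fun ω : ℕ → Θ => ω i) P) :=
          (Measure.map_map hg (measurable_pi_apply i)).symm
      _ = Measure.map g (Measure.map (fun ω : ℕ → Θ => ω 0) P) := by rw [hident i]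
      _ = Measure.map (fun ω : ℕ → Θ => g (ω 0)) P :=
          Measure.map_map hg (measurable_pi_apply 0)
  -- part 1
  have part1 : ∀ n : ℕ, ∀ᵐ ω ∂P,
      (∑ k ∈ Finset.range n, (∏ j ∈ Finset.range k, A (ω j)) * B (ω k))
        + (∏ j ∈ Finset.range n, A (ω j)) * Y (fun k => ω (k + n)) ≤ Y ω := by
    intro n
    have hθ : Measurable (fun (ω : ℕ → Θ) (k : ℕ) => ω (k + n)) :=
      measurable_pi_lambda _ fun k => measurable_pi_apply (k + n)
    have hYshift : ∀ᵐ ω ∂P, Tendsto (fun m => backIter Ψ (fun k => ω (k + n)) m 0)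
        atTop (nhds (Y (fun k => ω (k + n)))) := by
      have h := hY0
      rw [← shift_invariant P hiid hident n] at h
      exact ae_of_ae_map hθ.aemeasurable h
    filter_upwards [hdom, hY0, hYshift] with ω hd h0 hs
    have key : ∀ m, (∑ k ∈ Finset.range n, (∏ j ∈ Finset.range k, A (ω j)) * B (ω k))
        + (∏ j ∈ Finset.range n, A (ω j)) * backIter Ψ (fun k => ω (k + n)) m 0
        ≤ backIter Ψ ω (m + n) 0 := by
      intro m
      rw [backIter_add]
      exact backIter_ge Ψ A B hApos ω (fun k x => hd k x) n _
    have t1 : Tendsto (fun m => backIter Ψ ω (m + n) 0) atTop (nhds (Y ω)) :=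
      h0.comp (tendsto_add_atTop_nat n)
    have t2 : Tendsto (fun m =>
        (∑ k ∈ Finset.range n, (∏ j ∈ Finset.range k, A (ω j)) * B (ω k))
        + (∏ j ∈ Finset.range n, A (ω j)) * backIter Ψ (fun k => ω (k + n)) m 0) atTop
        (nhds ((∑ k ∈ Finset.range n, (∏ j ∈ Finset.range k, A (ω j)) * B (ω k))
        + (∏ j ∈ Finset.range n, A (ω j)) * Y (fun k => ω (k + n)))) :=
      tendsto_const_nhds.add (hs.const_mul _)
    exact le_of_tendsto_of_tendsto' t2 t1 key
  refine ⟨part1, ?_⟩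
  -- part 2 : first, a.s. summability via SLLN
  set cA : ℝ := ∫ ω, Real.log (A (ω 0)) ∂P with hcA
  have hslA : ∀ᵐ ω ∂P, Tendsto
      (fun m : ℕ => (∑ i ∈ Finset.range m, Real.log (A (ω i))) / m) atTop (nhds cA) := by
    have hmeas : Measurable fun θ => Real.log (A θ) := Real.measurable_log.comp hAm
    have hindep : Pairwise (Function.onFun (IndepFun · · P)
        (fun i (ω : ℕ → Θ) => Real.log (A (ω i)))) := by
      intro i j hij
      exact (hiid.comp (fun _ θ => Real.log (A θ)) (fun _ => hmeas)).indepFun hij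
    exact strong_law_ae_real _ hlogA_int hindep (fun i => hid _ hmeas i)
  have hZmeas : Measurable fun θ => max (Real.log |B θ|) 0 :=
    (Real.measurable_log.comp hBm.abs).max measurable_const
  have hZint : Integrable (fun ω : ℕ → Θ => max (Real.log |B (ω 0)|) 0) P := by
    refine ⟨(hZmeas.comp (measurable_pi_apply 0)).aestronglyMeasurable, ?_⟩
    exact (hasFiniteIntegral_iff_ofReal
      (ae_of_all _ fun ω => le_max_right _ _)).mpr hlogB
  set cB : ℝ := ∫ ω, max (Real.log |B (ω 0)|) 0 ∂P with hcB
  have hslZ : ∀ᵐ ω ∂P, Tendsto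
      (fun m : ℕ => (∑ i ∈ Finset.range m, max (Real.log |B (ω i)|) 0) / m)
      atTop (nhds cB) := by
    have hindep : Pairwise (Function.onFun (IndepFun · · P)
        (fun i (ω : ℕ → Θ) => max (Real.log |B (ω i)|) 0)) := by
      intro i j hij
      exact (hiid.comp (fun _ θ => max (Real.log |B θ|) 0) (fun _ => hZmeas)).indepFun hij
    exact strong_law_ae_real _ hZint hindep (fun i => hid _ hZmeas i)
  have hsummable : ∀ᵐ ω ∂P, Summable
      (fun k : ℕ => (∏ j ∈ Finset.range k, A (ω j)) * B (ω k)) := by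
    filter_upwards [hslA, hslZ] with ω hA hZ
    set SA : ℕ → ℝ := fun m => ∑ i ∈ Finset.range m, Real.log (A (ω i)) with hSA
    set SZ : ℕ → ℝ := fun m => ∑ i ∈ Finset.range m, max (Real.log |B (ω i)|) 0 with hSZ
    -- individual log⁺ |B| terms are o(k)
    have hZk : Tendsto (fun k : ℕ => max (Real.log |B (ω k)|) 0 / k) atTop (nhds 0) := by
      have hrat : Tendsto (fun k : ℕ => ((k + 1 : ℕ) : ℝ) / (k : ℝ)) atTop (nhds 1) := by
        have h1 : Tendsto (fun k : ℕ => 1 + 1 / (k:ℝ)) atTop (nhds (1 + 0)) :=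
          tendsto_const_nhds.add tendsto_one_div_atTop_nhds_zero_nat
        rw [add_zero] at h1
        refine h1.congr' ?_
        filter_upwards [eventually_ge_atTop 1] with k hk
        have hk0 : (k:ℝ) ≠ 0 := Nat.cast_ne_zero.mpr (by omega)
        push_cast
        field_simp
      have ht1 : Tendsto (fun k : ℕ => SZ (k + 1) / ((k + 1 : ℕ) : ℝ) * (((k + 1 : ℕ) : ℝ) / k))
          atTop (nhds (cB * 1)) :=
        Tendsto.mul (hZ.comp (tendsto_add_atTop_nat 1)) hrat
      have ht2 : Tendsto
          (fun k : ℕ => SZ (k + 1) / ((k + 1 : ℕ) : ℝ) * (((k + 1 : ℕ) : ℝ) / k) - SZ k / k) atTop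
          (nhds (cB * 1 - cB)) := ht1.sub hZ
      rw [show cB * 1 - cB = 0 by ring] at ht2
      refine ht2.congr' ?_
      filter_upwards [eventually_ge_atTop 1] with k hk
      have hk0 : (k:ℝ) ≠ 0 := Nat.cast_ne_zero.mpr (by omega)
      have hk10 : ((k:ℝ) + 1) ≠ 0 := by positivity
      have hsz : SZ (k + 1) = SZ k + max (Real.log |B (ω k)|) 0 := by
        simp [hSZ, Finset.sum_range_succ]
      rw [hsz]
      push_cast
      field_simp
      ring
    have hcomb : Tendsto (fun k : ℕ => SA k / k + max (Real.log |B (ω k)|) 0 / k)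
        atTop (nhds (cA + 0)) := hA.add hZk
    rw [add_zero] at hcomb
    have hev : ∀ᶠ k : ℕ in atTop,
        SA k / k + max (Real.log |B (ω k)|) 0 / k < cA / 2 :=
      hcomb.eventually_lt_const (by linarith [hlogA_neg])
    refine Summable.of_norm_bounded_eventually_nat
      (g := fun k => Real.exp (cA / 2) ^ k) ?_ ?_
    · refine summable_geometric_of_lt_one (Real.exp_nonneg _) ?_
      exact Real.exp_lt_one_iff.mpr (by linarith [hlogA_neg])
    · filter_upwards [hev, eventually_ge_atTop 1] with k hk hk1
      have hkpos : (0:ℝ) < k := by exact_mod_cast Nat.lt_of_lt_of_le Nat.zero_lt_one hk1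
      have hsum_lt : SA k + max (Real.log |B (ω k)|) 0 < cA / 2 * k := by
        rw [← add_div] at hk
        exact (div_lt_iff₀ hkpos).mp hk
      have hPiexp : (∏ j ∈ Finset.range k, A (ω j)) = Real.exp (SA k) := by
        rw [hSA, Real.exp_sum]
        exact Finset.prod_congr rfl fun j _ => (Real.exp_log (hApos _)).symm
      have hPipos : (0:ℝ) < ∏ j ∈ Finset.range k, A (ω j) :=
        Finset.prod_pos fun j _ => hApos _
      have habs : ‖(∏ j ∈ Finset.range k, A (ω j)) * B (ω k)‖
          ≤ Real.exp (SA k + max (Real.log |B (ω k)|) 0) := by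
        rw [Real.norm_eq_abs, abs_mul, abs_of_pos hPipos, Real.exp_add, hPiexp]
        rcases eq_or_ne (B (ω k)) 0 with hB | hB
        · rw [hB, abs_zero, mul_zero]; positivity
        · have hb : |B (ω k)| ≤ Real.exp (max (Real.log |B (ω k)|) 0) := by
            calc |B (ω k)| = Real.exp (Real.log |B (ω k)|) :=
                  (Real.exp_log (abs_pos.mpr hB)).symm
              _ ≤ _ := Real.exp_le_exp.mpr (le_max_left _ _)
          exact mul_le_mul_of_nonneg_left hb (Real.exp_pos _).le
      calc ‖(∏ j ∈ Finset.range k, A (ω j)) * B (ω k)‖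
          ≤ Real.exp (SA k + max (Real.log |B (ω k)|) 0) := habs
        _ ≤ Real.exp (cA / 2 * k) := Real.exp_le_exp.mpr hsum_lt.le
        _ = Real.exp (cA / 2) ^ k := by rw [mul_comm, Real.exp_nat_mul]
  -- now conclude part 2
  filter_upwards [hsummable, hdom, hY0] with ω hsum hd h0
  have htendsum : Tendsto
      (fun m => ∑ k ∈ Finset.range m, (∏ j ∈ Finset.range k, A (ω j)) * B (ω k)) atTop
      (nhds (∑' k : ℕ, (∏ j ∈ Finset.range k, A (ω j)) * B (ω k))) :=
    hsum.hasSum.tendsto_sum_nat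
  refine le_of_tendsto_of_tendsto' htendsum h0 fun m => ?_
  have := backIter_ge Ψ A B hApos ω (fun k x => hd k x) m 0
  simpa using this
end
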